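/- arXiv:1308.2888 — 2 statements merged into one kernel-verified Lean document; each statement's English description precedes it below -/
import Mathlib

section
/- In the Klein bottle group G = ⟨a, b | a b a⁻¹ = b⁻¹⟩, two elements a^{n₁} b^{m₁} and a^{n₂} b^{m₂} are conjugate in G if and only if either (n₁ = n₂ and m₁ = ±m₂), or (n₁ = n₂ is odd and m₁ ≡ m₂ mod 2). -/
/-!
`a ^ n * b ^ m ↦ ⟨n, m⟩` is a homomorphism onto the semidirect product `ℤ ⋊ ℤ` in which `a` acts
on `b` by inversion. There the conjugate of `⟨n, m⟩` by `⟨q, p⟩` is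
`⟨n, (-1) ^ q * (m + ((-1) ^ n - 1) * p)⟩`, so `n` is invariant, and so is `m` up to sign when `n`
is even, its parity when `n` is odd. Conversely, conjugation by `a` flips the
sign of `m`, and for odd `n` conjugation by `b ^ k` shifts `m` by `2 * k`.
-/

/-- Relators of the Klein bottle group ⟨a, b | a b a⁻¹ = b⁻¹⟩. -/
abbrev kleinRels : Set (FreeGroup (Fin 2)) :=
  {FreeGroup.of 0 * FreeGroup.of 1 * (FreeGroup.of 0)⁻¹ * FreeGroup.of 1}

abbrev KleinGroup := PresentedGroup kleinRels

noncomputable def ka : KleinGroup := PresentedGroup.of 0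
noncomputable def kb : KleinGroup := PresentedGroup.of 1

lemma ka_mul_kb_mul_ka_inv : ka * kb * ka⁻¹ = kb⁻¹ := by
  have h : PresentedGroup.mk kleinRels
      (FreeGroup.of 0 * FreeGroup.of 1 * (FreeGroup.of 0)⁻¹ * FreeGroup.of 1) = 1 :=
    (QuotientGroup.eq_one_iff _).mpr (Subgroup.subset_normalClosure rfl)
  simp only [map_mul, map_inv] at h
  exact mul_eq_one_iff_eq_inv.mp h

lemma ka_mul_kb_zpow_mul_ka_inv (k : ℤ) : ka * kb ^ k * ka⁻¹ = kb ^ (-k) := by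
  rw [← conj_zpow, ka_mul_kb_mul_ka_inv, inv_zpow, zpow_neg]

lemma kb_zpow_mul_ka (k : ℤ) : kb ^ k * ka = ka * kb ^ (-k) := by
  rw [← inv_mul_cancel_right (ka * kb ^ (-k)) ka, ka_mul_kb_zpow_mul_ka_inv, neg_neg]

lemma kb_zpow_mul_ka_inv (k : ℤ) : kb ^ k * ka⁻¹ = ka⁻¹ * kb ^ (-k) := by
  rw [eq_inv_mul_iff_mul_eq, ← mul_assoc, ka_mul_kb_zpow_mul_ka_inv]

lemma kb_zpow_mul_ka_zpow (k n : ℤ) :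
    kb ^ k * ka ^ n = ka ^ n * kb ^ ((n.negOnePow : ℤ) * k) := by
  induction n using Int.induction_on generalizing k with
  | zero => simp
  | succ n ih =>
    rw [zpow_add_one, ← mul_assoc, ih, mul_assoc, kb_zpow_mul_ka, ← mul_assoc,
      Int.negOnePow_succ, Units.val_neg, neg_mul]
  | pred n ih =>
    rw [zpow_sub_one, ← mul_assoc, ih, mul_assoc, kb_zpow_mul_ka_inv, ← mul_assoc,
      Int.negOnePow_sub, Int.negOnePow_one, Units.val_mul, Units.val_neg, Units.val_one,
      mul_neg_one, neg_mul]

lemma isConj_ka_zpow_mul_kb_zpow_neg (n m : ℤ) :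
    IsConj (ka ^ n * kb ^ m) (ka ^ n * kb ^ (-m)) :=
  isConj_iff.mpr ⟨ka, by
    rw [mul_inv_eq_iff_eq_mul, mul_assoc, kb_zpow_mul_ka, ← mul_assoc, ← mul_assoc, neg_neg,
      ← zpow_one_add, ← zpow_add_one, add_comm]⟩

lemma isConj_ka_zpow_mul_kb_zpow_add_two_mul {n : ℤ} (hn : Odd n) (m k : ℤ) :
    IsConj (ka ^ n * kb ^ (m + 2 * k)) (ka ^ n * kb ^ m) :=
  isConj_iff.mpr ⟨kb ^ k, by
    rw [mul_inv_eq_iff_eq_mul, ← mul_assoc, kb_zpow_mul_ka_zpow, Int.negOnePow_odd n hn,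
      mul_assoc, mul_assoc, ← zpow_add, ← zpow_add]
    congr 2
    push_cast
    ring⟩

@[ext]
structure KleinModel where
  n : ℤ
  m : ℤ

namespace KleinModel

-- `⟨n, m⟩` stands for `a ^ n * b ^ m`; the product comes from
-- `b ^ m * a ^ n' = a ^ n' * b ^ ((-1) ^ n' * m)`.
instance : Mul KleinModel := ⟨fun x y => ⟨x.n + y.n, y.n.negOnePow * x.m + y.m⟩⟩
instance : One KleinModel := ⟨⟨0, 0⟩⟩
instance : Inv KleinModel := ⟨fun x => ⟨-x.n, -(x.n.negOnePow * x.m)⟩⟩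

lemma mul_def (x y : KleinModel) : x * y = ⟨x.n + y.n, y.n.negOnePow * x.m + y.m⟩ := rfl
lemma one_def : (1 : KleinModel) = ⟨0, 0⟩ := rfl
lemma inv_def (x : KleinModel) : x⁻¹ = ⟨-x.n, -(x.n.negOnePow * x.m)⟩ := rfl

instance : Group KleinModel where
  mul_assoc x y z := by
    ext <;> simp only [mul_def, Int.negOnePow_add, Units.val_mul] <;> ring
  one_mul x := by ext <;> simp [mul_def, one_def]
  mul_one x := by ext <;> simp [mul_def, one_def]
  inv_mul_cancel x := by
    ext
    · simp [mul_def, inv_def, one_def]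
    · simp only [mul_def, inv_def, one_def, mul_neg, ← mul_assoc, ← Units.val_mul,
        Int.units_mul_self, Units.val_one, one_mul, neg_add_cancel]

def a : KleinModel := ⟨1, 0⟩
def b : KleinModel := ⟨0, 1⟩

lemma a_zpow (n : ℤ) : a ^ n = ⟨n, 0⟩ := by
  induction n using Int.induction_on with
  | zero => rfl
  | succ n ih => rw [zpow_add_one, ih]; ext <;> simp [a, mul_def]
  | pred n ih => rw [zpow_sub_one, ih]; ext <;> simp [a, mul_def, inv_def]; ring

lemma b_zpow (m : ℤ) : b ^ m = ⟨0, m⟩ := by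
  induction m using Int.induction_on with
  | zero => rfl
  | succ m ih => rw [zpow_add_one, ih]; ext <;> simp [b, mul_def]
  | pred m ih => rw [zpow_sub_one, ih]; ext <;> simp [b, mul_def, inv_def]; ring

lemma mul_mul_inv (c x : KleinModel) :
    c * x * c⁻¹ = ⟨x.n, c.n.negOnePow * (x.m + (x.n.negOnePow - 1) * c.m)⟩ := by
  ext
  · simp [mul_def, inv_def]
  · simp only [mul_def, inv_def, Int.negOnePow_neg]
    ring

lemma of_isConj {n₁ m₁ n₂ m₂ : ℤ} (h : IsConj (⟨n₁, m₁⟩ : KleinModel) ⟨n₂, m₂⟩) :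
    (n₁ = n₂ ∧ (m₁ = m₂ ∨ m₁ = -m₂)) ∨ (n₁ = n₂ ∧ Odd n₁ ∧ m₁ % 2 = m₂ % 2) := by
  obtain ⟨c, hc⟩ := isConj_iff.mp h
  simp only [mul_mul_inv, mk.injEq] at hc
  obtain ⟨rfl, hm⟩ := hc
  rcases Int.even_or_odd n₁ with heven | hodd
  · refine .inl ⟨rfl, ?_⟩
    rw [Int.negOnePow_even n₁ heven] at hm
    rcases Int.units_eq_one_or c.n.negOnePow with hc | hc <;> norm_num [hc] at hm <;> omega
  · refine .inr ⟨rfl, hodd, ?_⟩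
    rw [Int.negOnePow_odd n₁ hodd] at hm
    rcases Int.units_eq_one_or c.n.negOnePow with hc | hc <;> norm_num [hc] at hm <;> omega

end KleinModel

lemma kleinRels_map_eq_one :
    ∀ r ∈ kleinRels, FreeGroup.lift ![KleinModel.a, KleinModel.b] r = 1 := by
  rintro r rfl
  ext <;> simp [KleinModel.a, KleinModel.b, KleinModel.mul_def, KleinModel.inv_def,
    KleinModel.one_def]

noncomputable def toKleinModel : KleinGroup →* KleinModel :=
  PresentedGroup.toGroup kleinRels_map_eq_one

lemma toKleinModel_ka_zpow_mul_kb_zpow (n m : ℤ) : toKleinModel (ka ^ n * kb ^ m) = ⟨n, m⟩ := by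
  rw [map_mul, map_zpow, map_zpow, toKleinModel, ka, kb, PresentedGroup.toGroup.of,
    PresentedGroup.toGroup.of]
  simp [KleinModel.a_zpow, KleinModel.b_zpow, KleinModel.mul_def]

/-- a^{n₁} b^{m₁} and a^{n₂} b^{m₂} are conjugate in the Klein bottle group iff
either n₁ = n₂ and m₁ = ±m₂, or n₁ = n₂ is odd and m₁ ≡ m₂ (mod 2). -/
theorem stmt_3 (n₁ m₁ n₂ m₂ : ℤ) :
    IsConj (ka ^ n₁ * kb ^ m₁) (ka ^ n₂ * kb ^ m₂) ↔
      ((n₁ = n₂ ∧ (m₁ = m₂ ∨ m₁ = -m₂)) ∨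
        (n₁ = n₂ ∧ Odd n₁ ∧ m₁ % 2 = m₂ % 2)) := by
  refine ⟨fun h => KleinModel.of_isConj ?_, ?_⟩
  · simpa only [toKleinModel_ka_zpow_mul_kb_zpow] using toKleinModel.map_isConj h
  · rintro (⟨rfl, rfl | rfl⟩ | ⟨rfl, hodd, hmod⟩)
    · exact IsConj.refl _
    · exact (isConj_ka_zpow_mul_kb_zpow_neg n₁ m₂).symm
    · obtain ⟨k, rfl⟩ : ∃ k, m₁ = m₂ + 2 * k := ⟨(m₁ - m₂) / 2, by omega⟩
      exact isConj_ka_zpow_mul_kb_zpow_add_two_mul hodd m₂ k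
end

section
/- Let G be a group with an exact sequence 1 → ⟨h⟩ → G → Q → 1 where h is central of infinite order. If u, v ∈ G have conjugate images in Q, say ū = ā v̄ ā⁻¹, then for any lift a of ā there is a unique integer p with u = a v a⁻¹ hᵖ; and u is conjugate to v in G if and only if p lies in the subgroup of ℤ generated by the integers n(x) defined by [v, x] = h^{n(x)} for x ranging over lifts of generators of the centralizer of v̄ in Q. -/
/-!
Conjugating by the lift `a` turns `u` into `v * h ^ p`, so `u ~ v` iff some `g` satisfies
`g (v hᵖ) g⁻¹ = v`, i.e. `v g = g v hᵖ`. Since `h` is central, the exponents `n` for which some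
`g` satisfies `v g = g v hⁿ` form a subgroup of `ℤ`, and an element `g` with `v g = g v hⁿ` is
exactly one whose image centralizes `v̄` and whose commutator with `v` is `hⁿ`; so the integers `n(g)`
already form that subgroup.
-/

open QuotientGroup

theorem isConj_mul_iff {G : Type*} [Group G] (v z : G) :
    IsConj (v * z) v ↔ ∃ g, v * g = g * v * z := by
  simp only [isConj_iff]
  exact exists_congr fun g => by rw [mul_inv_eq_iff_eq_mul, eq_comm, ← mul_assoc]

theorem commutatorElement_eq_iff_mul_eq_of_mem_center {G : Type*} [Group G] {z : G}
    (hz : z ∈ Subgroup.center G) (x y : G) :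
    x * y * x⁻¹ * y⁻¹ = z ↔ x * y = y * x * z := by
  rw [mul_inv_eq_iff_eq_mul, mul_inv_eq_iff_eq_mul, Subgroup.mem_center_iff.mp hz, mul_assoc]

theorem exists_eq_mul_zpow_of_mk'_eq {G : Type*} [Group G] {h : G}
    [(Subgroup.zpowers h).Normal] {x y : G}
    (hxy : mk' (Subgroup.zpowers h) x = mk' (Subgroup.zpowers h) y) :
    ∃ p : ℤ, x = y * h ^ p := by
  obtain ⟨z, hz, rfl⟩ := (mk'_eq_mk' _).mp hxy.symm
  obtain ⟨p, rfl⟩ := Subgroup.mem_zpowers_iff.mp hz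
  exact ⟨p, rfl⟩

section TwistExponents

variable {G : Type*} [Group G] {h : G}

theorem mul_eq_mul_zpow_add (hc : h ∈ Subgroup.center G) {v g₁ g₂ : G} {m n : ℤ}
    (h₁ : v * g₁ = g₁ * v * h ^ m) (h₂ : v * g₂ = g₂ * v * h ^ n) :
    v * (g₁ * g₂) = g₁ * g₂ * v * h ^ (m + n) := by
  have hcomm := Subgroup.mem_center_iff.mp (Subgroup.zpow_mem _ hc m) g₂
  rw [← mul_assoc, h₁, mul_assoc, ← hcomm, ← mul_assoc, mul_assoc g₁, h₂, zpow_add]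
  group

theorem mul_inv_eq_inv_mul_mul_zpow_neg (hc : h ∈ Subgroup.center G) {v g : G} {n : ℤ}
    (hg : v * g = g * v * h ^ n) :
    v * g⁻¹ = g⁻¹ * v * h ^ (-n) := by
  have hcomm := Subgroup.mem_center_iff.mp (Subgroup.zpow_mem _ hc n) g⁻¹
  suffices v * g⁻¹ * h ^ n = g⁻¹ * v by rw [← this, zpow_neg]; group
  calc v * g⁻¹ * h ^ n = g⁻¹ * (v * g) * g⁻¹ := by rw [mul_assoc, hcomm, hg]; group
    _ = g⁻¹ * v := by group

/-- The exponents `n` for which `v * hⁿ` is conjugate to `v` (see `isConj_mul_iff`). -/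
def twistExponents (hc : h ∈ Subgroup.center G) (v : G) : AddSubgroup ℤ where
  carrier := {n | ∃ g, v * g = g * v * h ^ n}
  add_mem' := fun ⟨g₁, h₁⟩ ⟨g₂, h₂⟩ => ⟨g₁ * g₂, mul_eq_mul_zpow_add hc h₁ h₂⟩
  zero_mem' := ⟨1, by simp⟩
  neg_mem' := fun ⟨g, hg⟩ => ⟨g⁻¹, mul_inv_eq_inv_mul_mul_zpow_neg hc hg⟩

theorem isConj_iff_mem_twistExponents (hc : h ∈ Subgroup.center G) {u v a : G} {p : ℤ}
    (hp : u = a * v * a⁻¹ * h ^ p) :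
    IsConj u v ↔ p ∈ twistExponents hc v := by
  have hconj : IsConj (v * h ^ p) u := by
    refine isConj_iff.mpr ⟨a, ?_⟩
    rw [hp, mul_assoc (a * v), Subgroup.mem_center_iff.mp (Subgroup.zpow_mem _ hc p) a⁻¹]
    group
  exact ⟨fun huv => (isConj_mul_iff v _).mp (hconj.trans huv),
    fun hmem => hconj.symm.trans ((isConj_mul_iff v _).mpr hmem)⟩

theorem closure_commutatorExponents_eq_twistExponents (hc : h ∈ Subgroup.center G)
    [(Subgroup.zpowers h).Normal] (v : G) :
    AddSubgroup.closure {n : ℤ | ∃ g : G,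
      mk' (Subgroup.zpowers h) g ∈ Subgroup.centralizer {mk' (Subgroup.zpowers h) v} ∧
      v * g * v⁻¹ * g⁻¹ = h ^ n} = twistExponents hc v := by
  have hcomm (g : G) (n : ℤ) :=
    commutatorElement_eq_iff_mul_eq_of_mem_center (Subgroup.zpow_mem _ hc n) v g
  convert AddSubgroup.closure_eq (twistExponents hc v) using 2
  ext n
  refine ⟨fun ⟨g, _, hg⟩ => ⟨g, (hcomm g n).mp hg⟩, fun ⟨g, hg⟩ => ⟨g, ?_, (hcomm g n).mpr hg⟩⟩
  -- `hⁿ` dies in the quotient, so `v g = g v hⁿ` makes the images commute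
  have hhn : mk' (Subgroup.zpowers h) (h ^ n) = 1 :=
    (eq_one_iff _).mpr (Subgroup.zpow_mem_zpowers h n)
  rw [Subgroup.mem_centralizer_singleton_iff, ← map_mul, ← map_mul, hg, map_mul _ (g * v), hhn, mul_one]

end TwistExponents

/-- Let h ∈ G be central of infinite order, N = ⟨h⟩, Q = G/N, ρ the quotient map.
If ū = ā v̄ ā⁻¹ in Q, then for any lift a there is a unique p ∈ ℤ with
u = a v a⁻¹ hᵖ; and for such p, u ~ v in G iff p lies in the subgroup of ℤ
generated by the integers n(g) with [v, g] = h^{n(g)}, g ranging over lifts of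
elements of the centralizer of v̄ in Q. -/
theorem stmt_19 {G : Type*} [Group G] (h : G)
    (hc : h ∈ Subgroup.center G)
    (hinf : ∀ n : ℤ, h ^ n = 1 → n = 0)
    [hN : (Subgroup.zpowers h).Normal]
    (u v a : G)
    (hconj : QuotientGroup.mk' (Subgroup.zpowers h) u =
      QuotientGroup.mk' (Subgroup.zpowers h) a *
        QuotientGroup.mk' (Subgroup.zpowers h) v *
        (QuotientGroup.mk' (Subgroup.zpowers h) a)⁻¹) :
    (∃! p : ℤ, u = a * v * a⁻¹ * h ^ p) ∧
      ∀ p : ℤ, u = a * v * a⁻¹ * h ^ p →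
        (IsConj u v ↔
          p ∈ AddSubgroup.closure {n : ℤ | ∃ g : G,
            QuotientGroup.mk' (Subgroup.zpowers h) g ∈
              Subgroup.centralizer {QuotientGroup.mk' (Subgroup.zpowers h) v} ∧
            v * g * v⁻¹ * g⁻¹ = h ^ n}) := by
  have hzpow_inj : Function.Injective fun n : ℤ => h ^ n :=
    injective_zpow_iff_not_isOfFinOrder.mpr fun hfin =>
      let ⟨n, hn, hn1⟩ := isOfFinOrder_iff_zpow_eq_one.mp hfin
      hn (hinf n hn1)
  obtain ⟨p₀, hp₀⟩ := exists_eq_mul_zpow_of_mk'_eq (h := h) (x := u) (y := a * v * a⁻¹)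
    (by simp only [map_mul, map_inv, hconj])
  refine ⟨⟨p₀, hp₀, fun q hq => hzpow_inj (mul_left_cancel (hq.symm.trans hp₀))⟩, fun p hp => ?_⟩
  rw [closure_commutatorExponents_eq_twistExponents hc]
  exact isConj_iff_mem_twistExponents hc hp
end
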